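/- Let C and D be real symmetric positive semidefinite d × d matrices, let Π be the orthogonal projection onto the range (column space) of C (i.e., Π is symmetric, Π² = Π, and the range of Π equals the range of C), and let P_C and P_{C+D} be Moore–Penrose pseudoinverses of C and C + D respectively. Then Π P_{C+D} Π ⪯ Π P_C Π in the Loewner order. -/

import Mathlib

open Matrix BigOperators

/-- `P` is a Moore–Penrose pseudoinverse of `M`. -/
def IsMoorePenrose {d : ℕ} (M P : Matrix (Fin d) (Fin d) ℝ) : Prop :=
  M * P * M = M ∧ P * M * P = P ∧ (M * P)ᵀ = M * P ∧ (P * M)ᵀ = P * M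

/-!
Write `y = Π x`; since `Π` has the range of `C`, `y = C w` for some `w`. The quadratic form of a
pseudoinverse is a maximum: `y ⬝ C⁺ y = w ⬝ C w ≥ 2 z ⬝ C w - z ⬝ C z` for every `z`, by positivity
of `C` on `w - z`, while for `M = C + D` the maximum of `2 z ⬝ y - z ⬝ M z` is attained at
`z = M⁺ y`. Dropping the term `z ⬝ D z ≥ 0` from the latter value compares the two forms.
-/

section QuadraticForm

variable {n m : Type*} [Fintype n] [Fintype m]

lemma mulVec_dotProduct_of_transpose_eq {R : Type*} [CommSemiring R] {A : Matrix n n R}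
    (hA : Aᵀ = A) (u v : n → R) : A *ᵥ u ⬝ᵥ v = u ⬝ᵥ A *ᵥ v := by
  rw [dotProduct_mulVec, ← vecMul_transpose, hA, dotProduct_comm]

lemma two_mul_dotProduct_mulVec_sub_le {C : Matrix n n ℝ} (hC : C.PosSemidef) (w z : n → ℝ) :
    2 * (z ⬝ᵥ C *ᵥ w) - z ⬝ᵥ C *ᵥ z ≤ w ⬝ᵥ C *ᵥ w := by
  have hCt : Cᵀ = C := hC.1
  have hwz : w ⬝ᵥ C *ᵥ z = z ⬝ᵥ C *ᵥ w := by
    rw [← mulVec_dotProduct_of_transpose_eq hCt, dotProduct_comm]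
  have := hC.dotProduct_mulVec_nonneg (w - z)
  simp only [star_trivial, mulVec_sub, dotProduct_sub, sub_dotProduct, hwz] at this
  linarith

lemma posSemidef_transpose_mul_mul_of_nonneg_on_range {A : Matrix n n ℝ} (hA : Aᵀ = A)
    (B : Matrix n m ℝ) (h : ∀ y ∈ LinearMap.range B.mulVecLin, 0 ≤ y ⬝ᵥ A *ᵥ y) :
    (Bᵀ * A * B).PosSemidef := by
  refine .of_dotProduct_mulVec_nonneg (by simpa using isHermitian_conjTranspose_mul_mul B hA)
    fun x ↦ ?_
  simpa only [star_trivial, ← mulVec_mulVec, dotProduct_mulVec x Bᵀ, vecMul_transpose]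
    using h (B *ᵥ x) ⟨x, rfl⟩

end QuadraticForm

namespace IsMoorePenrose

variable {d : ℕ} {M P Q : Matrix (Fin d) (Fin d) ℝ}

lemma unique (hP : IsMoorePenrose M P) (hQ : IsMoorePenrose M Q) : P = Q := by
  obtain ⟨hP1, hP2, hP3, hP4⟩ := hP
  obtain ⟨hQ1, hQ2, hQ3, hQ4⟩ := hQ
  have hMP : M * P = M * Q :=
    calc M * P = (M * Q * M * P)ᵀ := by rw [hQ1, hP3]
    _ = M * P * (M * Q) := by rw [Matrix.mul_assoc (M * Q), transpose_mul, hP3, hQ3]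
    _ = M * Q := by rw [← Matrix.mul_assoc, hP1]
  have hPM : P * M = Q * M :=
    calc P * M = (P * M * (Q * M))ᵀ := by
          rw [Matrix.mul_assoc P M, ← Matrix.mul_assoc M Q M, hQ1, hP4]
    _ = Q * M * (P * M) := by rw [transpose_mul, hP4, hQ4]
    _ = Q * M := by rw [Matrix.mul_assoc, ← Matrix.mul_assoc M P M, hP1]
  calc P = P * M * P := hP2.symm
  _ = Q * M * Q := by rw [hPM, Matrix.mul_assoc, hMP, ← Matrix.mul_assoc]
  _ = Q := hQ2

lemma transpose (hP : IsMoorePenrose M P) : IsMoorePenrose Mᵀ Pᵀ := by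
  obtain ⟨h1, h2, h3, h4⟩ := hP
  refine ⟨?_, ?_, ?_, ?_⟩
  · rw [← transpose_mul, ← transpose_mul, ← Matrix.mul_assoc, h1]
  · rw [← transpose_mul, ← transpose_mul, ← Matrix.mul_assoc, h2]
  · rw [← transpose_mul, transpose_transpose, h4]
  · rw [← transpose_mul, transpose_transpose, h3]

lemma transpose_eq_self (hM : Mᵀ = M) (hP : IsMoorePenrose M P) : Pᵀ = P :=
  unique (hM ▸ hP.transpose) hP

lemma mulVec_dotProduct_mulVec_mulVec (hM : Mᵀ = M) (hP : IsMoorePenrose M P) (w : Fin d → ℝ) :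
    M *ᵥ w ⬝ᵥ P *ᵥ (M *ᵥ w) = w ⬝ᵥ M *ᵥ w := by
  rw [mulVec_dotProduct_of_transpose_eq hM, mulVec_mulVec, mulVec_mulVec, hP.1]

lemma dotProduct_mulVec_eq_two_mul_sub (hM : Mᵀ = M) (hP : IsMoorePenrose M P) (y : Fin d → ℝ) :
    y ⬝ᵥ P *ᵥ y = 2 * (P *ᵥ y ⬝ᵥ y) - P *ᵥ y ⬝ᵥ M *ᵥ (P *ᵥ y) := by
  have hPy : P *ᵥ y ⬝ᵥ y = y ⬝ᵥ P *ᵥ y := dotProduct_comm _ _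
  have hMPy : P *ᵥ y ⬝ᵥ M *ᵥ (P *ᵥ y) = y ⬝ᵥ P *ᵥ y := by
    rw [mulVec_dotProduct_of_transpose_eq (hP.transpose_eq_self hM), mulVec_mulVec,
      mulVec_mulVec, hP.2.1]
  rw [hPy, hMPy]
  ring

lemma mulVec_dotProduct_mulVec_mulVec_le_of_add {C D PC PCD : Matrix (Fin d) (Fin d) ℝ}
    (hC : C.PosSemidef) (hD : D.PosSemidef)
    (hPC : IsMoorePenrose C PC) (hPCD : IsMoorePenrose (C + D) PCD) (w : Fin d → ℝ) :
    C *ᵥ w ⬝ᵥ PCD *ᵥ (C *ᵥ w) ≤ C *ᵥ w ⬝ᵥ PC *ᵥ (C *ᵥ w) := by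
  set z := PCD *ᵥ (C *ᵥ w)
  have hCD : (C + D)ᵀ = C + D := hC.1.add hD.1
  have hz : 0 ≤ z ⬝ᵥ D *ᵥ z := by simpa using hD.dotProduct_mulVec_nonneg z
  calc C *ᵥ w ⬝ᵥ PCD *ᵥ (C *ᵥ w)
      = 2 * (z ⬝ᵥ C *ᵥ w) - z ⬝ᵥ C *ᵥ z - z ⬝ᵥ D *ᵥ z := by
        rw [hPCD.dotProduct_mulVec_eq_two_mul_sub hCD, add_mulVec, dotProduct_add]
        ring
    _ ≤ 2 * (z ⬝ᵥ C *ᵥ w) - z ⬝ᵥ C *ᵥ z := by linarith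
    _ ≤ w ⬝ᵥ C *ᵥ w := two_mul_dotProduct_mulVec_sub_le hC w z
    _ = C *ᵥ w ⬝ᵥ PC *ᵥ (C *ᵥ w) := (hPC.mulVec_dotProduct_mulVec_mulVec hC.1 w).symm

end IsMoorePenrose

theorem projected_pseudoinverse_monotone_general (d : ℕ)
    (C D Pi : Matrix (Fin d) (Fin d) ℝ)
    (hC : C.PosSemidef) (hD : D.PosSemidef)
    (hPiSymm : Piᵀ = Pi)
    (hPiRange : LinearMap.range Pi.mulVecLin = LinearMap.range C.mulVecLin)
    (PC PCD : Matrix (Fin d) (Fin d) ℝ)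
    (hPC : IsMoorePenrose C PC) (hPCD : IsMoorePenrose (C + D) PCD) :
    (Pi * PC * Pi - Pi * PCD * Pi).PosSemidef := by
  have hPC' : PCᵀ = PC := hPC.transpose_eq_self hC.1
  have hPCD' : PCDᵀ = PCD := hPCD.transpose_eq_self (hC.1.add hD.1)
  have hdiff : (PC - PCD)ᵀ = PC - PCD := by rw [transpose_sub, hPC', hPCD']
  rw [← Matrix.sub_mul, ← Matrix.mul_sub]
  nth_rewrite 1 [← hPiSymm]
  refine posSemidef_transpose_mul_mul_of_nonneg_on_range hdiff Pi fun y hy ↦ ?_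
  obtain ⟨w, rfl⟩ := hPiRange ▸ hy
  rw [mulVecLin_apply, sub_mulVec, dotProduct_sub, sub_nonneg]
  exact hPC.mulVec_dotProduct_mulVec_mulVec_le_of_add hC hD hPCD w

/-- Let `C, D` be PSD and `Π` the orthogonal projection onto the range of `C`.
Then `Π (C + D)⁺ Π ⪯ Π C⁺ Π` in the Loewner order. -/
theorem projected_pseudoinverse_monotone (d : ℕ)
    (C D Pi : Matrix (Fin d) (Fin d) ℝ)
    (hC : C.PosSemidef) (hD : D.PosSemidef)
    (hPiSymm : Piᵀ = Pi) (hPiIdem : Pi * Pi = Pi)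
    (hPiRange : LinearMap.range Pi.mulVecLin = LinearMap.range C.mulVecLin)
    (PC PCD : Matrix (Fin d) (Fin d) ℝ)
    (hPC : IsMoorePenrose C PC) (hPCD : IsMoorePenrose (C + D) PCD) :
    (Pi * PC * Pi - Pi * PCD * Pi).PosSemidef :=
  projected_pseudoinverse_monotone_general d C D Pi hC hD hPiSymm hPiRange PC PCD hPC hPCD
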